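/- arXiv:1509.04001 — 4 statements merged into one kernel-verified Lean document; each statement's English description precedes it below -/
import Mathlib

section
/- Let Ω ⊂ ℝⁿ be a measurable set, let R > 1, and let h : Ω × (0,R) → [0,∞] be a nonnegative measurable function. For ρ ∈ (0,R], set η(ρ) := ∫_{Ω×(0,ρ)} h(x,y) dx dy (a Lebesgue integral with values in [0,∞]). Then ∫_{Ω×(√R,R)} h(x,y)/y² dx dy ≤ 2 ∫_{√R}^{R} t^{-3} η(t) dt + η(R)/R². -/
/-!
For `0 < y ≤ R` one has `1 / y² = 1 / R² + 2 ∫_y^R t⁻³ dt`. Inserting this into the integral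
over `a < y < R` (here `a = √R`) splits it into at most `η(R) / R²` plus
`2 ∫∫_{a < y < t < R} h(x, y) t⁻³`, and Tonelli turns the latter into
`2 ∫_a^R t⁻³ ∫_{a < y < t} h ≤ 2 ∫_a^R t⁻³ η(t)`, since `a ≥ 0`.
-/

open MeasureTheory ENNReal Set

theorem inv_ofReal_sq_eq_lintegral_Ioo {y : ℝ} (hy : 0 < y) {R : ℝ} (hyR : y ≤ R) :
    (ENNReal.ofReal (y ^ 2))⁻¹
      = 2 * (∫⁻ t in Ioo y R, (ENNReal.ofReal (t ^ 3))⁻¹) + (ENNReal.ofReal (R ^ 2))⁻¹ := by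
  have hcont : ContinuousOn (fun t : ℝ => t ^ (-3 : ℤ)) (Icc y R) := fun t ht =>
    (continuousAt_zpow₀ _ _ (Or.inl (hy.trans_le ht.1).ne')).continuousWithinAt
  have hpos : ∀ t ∈ Ioo y R, 0 < t := fun t ht => hy.trans ht.1
  have hint : ∫ t in Ioo y R, t ^ (-3 : ℤ) = ((y ^ 2)⁻¹ - (R ^ 2)⁻¹) / 2 := by
    rw [← integral_Ioc_eq_integral_Ioo, ← intervalIntegral.integral_of_le hyR,
      integral_zpow (Or.inr ⟨by decide, by simp [uIcc_of_le hyR, hy.not_ge]⟩)]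
    norm_num [zpow_neg]
    ring
  have hlint : ∫⁻ t in Ioo y R, (ENNReal.ofReal (t ^ 3))⁻¹
      = ENNReal.ofReal (((y ^ 2)⁻¹ - (R ^ 2)⁻¹) / 2) := by
    rw [← hint, ofReal_integral_eq_lintegral_ofReal
      ((hcont.integrableOn_Icc).mono_set Ioo_subset_Icc_self)
      ((ae_restrict_iff' measurableSet_Ioo).2
        (Filter.Eventually.of_forall fun t ht => zpow_nonneg (hpos t ht).le _))]
    refine setLIntegral_congr_fun measurableSet_Ioo fun t ht => ?_
    rw [zpow_neg, zpow_ofNat, ENNReal.ofReal_inv_of_pos (pow_pos (hpos t ht) 3)]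
  have hRy : (R ^ 2)⁻¹ ≤ (y ^ 2)⁻¹ := inv_anti₀ (by positivity) (by gcongr)
  rw [hlint, ← ENNReal.ofReal_ofNat 2, ← ENNReal.ofReal_mul zero_le_two,
    ← ENNReal.ofReal_inv_of_pos (by positivity),
    ← ENNReal.ofReal_inv_of_pos (pow_pos (hy.trans_le hyR) 2),
    ← ENNReal.ofReal_add (by linarith) (by positivity)]
  congr 1
  ring

section

variable {X : Type*} [MeasurableSpace X] (μ : Measure (X × ℝ)) [SFinite μ]

theorem setLIntegral_mul_lintegral_Ioo_comm {h : X × ℝ → ℝ≥0∞} (hh : Measurable h)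
    {k : ℝ → ℝ≥0∞} (hk : Measurable k) (a R : ℝ) :
    ∫⁻ p in Prod.snd ⁻¹' Ioo a R, h p * (∫⁻ t in Ioo p.2 R, k t) ∂μ
      = ∫⁻ t in Ioo a R, k t * ∫⁻ p in Prod.snd ⁻¹' Ioo a t, h p ∂μ := by
  set D : Set ((X × ℝ) × ℝ) := {q | a < q.1.2 ∧ q.1.2 < q.2 ∧ q.2 < R}
  have hD : MeasurableSet D :=
    (measurableSet_lt measurable_const measurable_fst.snd).inter
      ((measurableSet_lt measurable_fst.snd measurable_snd).inter
        (measurableSet_lt measurable_snd measurable_const))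
  set F : (X × ℝ) × ℝ → ℝ≥0∞ := D.indicator fun q => h q.1 * k q.2
  have hF : Measurable F := ((hh.comp measurable_fst).mul (hk.comp measurable_snd)).indicator hD
  have lintegral_dt (p : X × ℝ) : ∫⁻ t, F (p, t)
      = (Prod.snd ⁻¹' Ioo a R).indicator (fun p => h p * ∫⁻ t in Ioo p.2 R, k t) p := by
    by_cases hp : p ∈ Prod.snd ⁻¹' Ioo a R
    · rw [indicator_of_mem hp, ← lintegral_const_mul _ hk, ← lintegral_indicator measurableSet_Ioo]
      congr 1 with t
      simp [F, D, indicator_apply, hp.1]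
    · rw [indicator_of_notMem hp, ← lintegral_zero]
      exact lintegral_congr fun t =>
        indicator_of_notMem (fun hq => hp ⟨hq.1, hq.2.1.trans hq.2.2⟩) _
  have lintegral_dμ (t : ℝ) : ∫⁻ p, F (p, t) ∂μ
      = (Ioo a R).indicator (fun t => k t * ∫⁻ p in Prod.snd ⁻¹' Ioo a t, h p ∂μ) t := by
    by_cases ht : t ∈ Ioo a R
    · rw [indicator_of_mem ht, mul_comm, ← lintegral_mul_const _ hh,
        ← lintegral_indicator (measurableSet_Ioo.preimage measurable_snd)]
      congr 1 with p
      classical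
      simp only [F, D, indicator_apply, mem_ofPred_eq, mem_preimage, mem_Ioo, ht.2, and_true]
    · rw [indicator_of_notMem ht, ← lintegral_zero]
      exact lintegral_congr fun p =>
        indicator_of_notMem (fun hq => ht ⟨hq.1.trans hq.2.1, hq.2.2⟩) _
  rw [← lintegral_indicator (measurableSet_Ioo.preimage measurable_snd),
    ← lintegral_indicator measurableSet_Ioo]
  simp_rw [← lintegral_dt, ← lintegral_dμ]
  exact lintegral_lintegral_swap hF.aemeasurable

theorem setLIntegral_div_sq_le {h : X × ℝ → ℝ≥0∞} (hh : Measurable h) {a : ℝ} (ha : 0 ≤ a)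
    (R : ℝ) (η : ℝ → ℝ≥0∞) (hη : ∀ t, η t = ∫⁻ p in Prod.snd ⁻¹' Ioo 0 t, h p ∂μ) :
    ∫⁻ p in Prod.snd ⁻¹' Ioo a R, h p / ENNReal.ofReal (p.2 ^ 2) ∂μ
      ≤ 2 * (∫⁻ t in Ioo a R, η t / ENNReal.ofReal (t ^ 3)) + η R / ENNReal.ofReal (R ^ 2) := by
  have hA : MeasurableSet (Prod.snd ⁻¹' Ioo a R : Set (X × ℝ)) :=
    measurableSet_Ioo.preimage measurable_snd
  have hk : Measurable fun t : ℝ => (ENNReal.ofReal (t ^ 3))⁻¹ := by fun_prop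
  have hη_ge (t : ℝ) : ∫⁻ p in Prod.snd ⁻¹' Ioo a t, h p ∂μ ≤ η t :=
    (hη t).symm ▸ lintegral_mono_set (preimage_mono (Ioo_subset_Ioo_left ha))
  calc ∫⁻ p in Prod.snd ⁻¹' Ioo a R, h p / ENNReal.ofReal (p.2 ^ 2) ∂μ
      = ∫⁻ p in Prod.snd ⁻¹' Ioo a R, 2 * (h p * ∫⁻ t in Ioo p.2 R, (ENNReal.ofReal (t ^ 3))⁻¹)
          + h p * (ENNReal.ofReal (R ^ 2))⁻¹ ∂μ := by
        refine setLIntegral_congr_fun hA fun p hp => ?_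
        rw [div_eq_mul_inv, inv_ofReal_sq_eq_lintegral_Ioo (ha.trans_lt hp.1) hp.2.le]
        ring
    _ = 2 * (∫⁻ t in Ioo a R, (ENNReal.ofReal (t ^ 3))⁻¹ * ∫⁻ p in Prod.snd ⁻¹' Ioo a t, h p ∂μ)
          + (∫⁻ p in Prod.snd ⁻¹' Ioo a R, h p ∂μ) * (ENNReal.ofReal (R ^ 2))⁻¹ := by
        rw [lintegral_add_right _ (hh.mul_const _), lintegral_const_mul' _ _ ofNat_ne_top,
          setLIntegral_mul_lintegral_Ioo_comm μ hh hk, lintegral_mul_const _ hh]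
    _ ≤ 2 * (∫⁻ t in Ioo a R, η t / ENNReal.ofReal (t ^ 3)) + η R / ENNReal.ofReal (R ^ 2) := by
        simp_rw [div_eq_mul_inv, mul_comm (η _), mul_comm _ (ENNReal.ofReal (R ^ 2))⁻¹]
        gcongr with t
        exacts [hη_ge t, hη_ge R]

end

theorem stmt_4_general (n : ℕ) (Ω : Set (EuclideanSpace ℝ (Fin n)))
    (R : ℝ)
    (h : EuclideanSpace ℝ (Fin n) × ℝ → ℝ≥0∞) (hh : Measurable h)
    (η : ℝ → ℝ≥0∞) (hη : ∀ ρ : ℝ, η ρ = ∫⁻ p in Ω ×ˢ Set.Ioo (0 : ℝ) ρ, h p) :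
    ∫⁻ p in Ω ×ˢ Set.Ioo (Real.sqrt R) R, h p / ENNReal.ofReal (p.2 ^ 2)
      ≤ 2 * (∫⁻ t in Set.Ioo (Real.sqrt R) R, η t / ENNReal.ofReal (t ^ 3))
        + η R / ENNReal.ofReal (R ^ 2) := by
  have restrict_prod_Ioo (b c : ℝ) : volume.restrict (Ω ×ˢ Ioo b c)
      = (volume.restrict (Ω ×ˢ univ)).restrict (Prod.snd ⁻¹' Ioo b c) := by
    rw [Measure.restrict_restrict (measurableSet_Ioo.preimage measurable_snd), prod_univ,
      prod_eq, inter_comm]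
  simp only [restrict_prod_Ioo] at hη ⊢
  exact setLIntegral_div_sq_le _ hh (Real.sqrt_nonneg R) R η hη

/-- Lemma 2.4 (herein): for a nonnegative measurable `h` on `Ω × (0,R)` and
`η(ρ) = ∫_{Ω×(0,ρ)} h`, one has
`∫_{Ω×(√R,R)} h(X)/y² dX ≤ 2 ∫_{√R}^R t⁻³ η(t) dt + η(R)/R²`. -/
theorem stmt_4 (n : ℕ) (Ω : Set (EuclideanSpace ℝ (Fin n))) (hΩ : MeasurableSet Ω)
    (R : ℝ) (hR : 1 < R)
    (h : EuclideanSpace ℝ (Fin n) × ℝ → ℝ≥0∞) (hh : Measurable h)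
    (η : ℝ → ℝ≥0∞) (hη : ∀ ρ : ℝ, η ρ = ∫⁻ p in Ω ×ˢ Set.Ioo (0 : ℝ) ρ, h p) :
    ∫⁻ p in Ω ×ˢ Set.Ioo (Real.sqrt R) R, h p / ENNReal.ofReal (p.2 ^ 2)
      ≤ 2 * (∫⁻ t in Set.Ioo (Real.sqrt R) R, η t / ENNReal.ofReal (t ^ 3))
        + η R / ENNReal.ofReal (R ^ 2) :=
  stmt_4_general n Ω R h hh η hη
end

section
/- Let n ≥ 2. Let U ⊆ ℝ^{n-1} be an open neighborhood of the origin and γ : U → ℝ a C² function with γ(0) = 0 and ∇γ(0) = 0. Let J ⊆ (0,∞) be open, and let u be a C² real-valued function on an open subset of ℝⁿ × ℝ containing the set {(x', γ(x'), y) : x' ∈ U, y ∈ J}, where points are written (x₁,…,x_{n-1}, x_n, y). Assume the Neumann boundary condition written in these coordinates: for every x' ∈ U and every y ∈ J, Σ_{i=1}^{n-1} ∂_{x_i}u(x', γ(x'), y) · ∂_{x_i}γ(x') − ∂_{x_n}u(x', γ(x'), y) = 0. Then for every y ∈ J and every j = 1,…,n−1, one has ∂_{x_j}∂_{x_n}u(0,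 y) = Σ_{i=1}^{n-1} ∂_{x_i}u(0, y) · ∂_{x_i}∂_{x_j}γ(0). -/
/-!
The Neumann expression `Σᵢ ∂ᵢu(x', γ x', y) ∂ᵢγ(x') - ∂ₙu(x', γ x', y)` vanishes for all `x'`
near `0`, so its derivative at `0` vanishes. Since `∇γ(0) = 0`, the graph map
`x' ↦ (x', γ x', y)` has the inclusion `w ↦ (w, 0, 0)` as derivative at `0`, and the terms
carrying a second derivative of `u` against `∂ᵢγ(0)` drop out of the product rule. What remains
is the identity, up to the symmetry of the Hessian of `γ`.
-/

open Filter Topology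

variable {E F G : Type*} [NormedAddCommGroup E] [NormedSpace ℝ E]
  [NormedAddCommGroup F] [NormedSpace ℝ F] [NormedAddCommGroup G] [NormedSpace ℝ G]

theorem HasFDerivAt.fderiv_comp_apply {u : F → G} {g : E → F} {L : E →L[ℝ] F} {x : E}
    (hg : HasFDerivAt g L x) (hu : DifferentiableAt ℝ (fderiv ℝ u) (g x)) (v : F) :
    HasFDerivAt (fun z => fderiv ℝ u (g z) v) ((fderiv ℝ (fderiv ℝ u) (g x) ∘L L).flip v) x := by
  simpa using (hu.hasFDerivAt.comp x hg).clm_apply (hasFDerivAt_const v x)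

theorem fderiv_fderiv_apply {u : F → G} {x : F} (hu : DifferentiableAt ℝ (fderiv ℝ u) x)
    (v w : F) : fderiv ℝ (fun z => fderiv ℝ u z v) x w = fderiv ℝ (fderiv ℝ u) x w v := by
  rw [(hu.hasFDerivAt.clm_apply (hasFDerivAt_const v x)).fderiv]
  simp

theorem ContDiffAt.differentiableAt_fderiv {f : E → F} {x : E} (hf : ContDiffAt ℝ 2 f x) :
    DifferentiableAt ℝ (fderiv ℝ f) x :=
  (hf.fderiv_right (m := 1) le_rfl).differentiableAt one_ne_zero

theorem hasFDerivAt_graph {γ : E → ℝ} {x : E} (hγ : HasFDerivAt γ (0 : E →L[ℝ] ℝ) x) (y : ℝ) :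
    HasFDerivAt (fun z => (z, γ z, y)) (ContinuousLinearMap.inl ℝ E (ℝ × ℝ)) x :=
  (hasFDerivAt_id x).prodMk (hγ.prodMk (hasFDerivAt_const y x))

theorem fderiv_fderiv_normal_of_neumann {ι : Type*} [Fintype ι] (e : ι → E)
    {γ : E → ℝ} {u : E × ℝ × ℝ → ℝ} {x₀ : E} {y : ℝ}
    (hγ₀ : HasFDerivAt γ (0 : E →L[ℝ] ℝ) x₀) (hγ : DifferentiableAt ℝ (fderiv ℝ γ) x₀)
    (hu : DifferentiableAt ℝ (fderiv ℝ u) (x₀, γ x₀, y))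
    (hNeu : ∀ᶠ x in 𝓝 x₀, ∑ i, fderiv ℝ u (x, γ x, y) (e i, 0, 0) * fderiv ℝ γ x (e i)
      - fderiv ℝ u (x, γ x, y) (0, 1, 0) = 0) (w : E) :
    fderiv ℝ (fderiv ℝ u) (x₀, γ x₀, y) (w, 0, 0) (0, 1, 0)
      = ∑ i, fderiv ℝ u (x₀, γ x₀, y) (e i, 0, 0) * fderiv ℝ (fderiv ℝ γ) x₀ w (e i) := by
  have hg := hasFDerivAt_graph hγ₀ y
  have hF := (HasFDerivAt.fun_sum (u := Finset.univ) fun i _ =>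
      (hg.fderiv_comp_apply hu (e i, 0, 0)).fun_mul
        ((hasFDerivAt_id x₀).fderiv_comp_apply hγ (e i))).sub
    (hg.fderiv_comp_apply hu (0, 1, 0))
  have h0 := congrArg (fun D => D w) (hF.unique (hasFDerivAt_zero_of_eventually_const 0 hNeu))
  simp only [id_eq, ContinuousLinearMap.comp_id, hγ₀.fderiv, zero_apply, zero_smul, add_zero,
    sub_apply, sum_apply, smul_apply, ContinuousLinearMap.flip_apply, smul_eq_mul,
    ContinuousLinearMap.comp_apply, ContinuousLinearMap.inl_apply, sub_eq_zero] at h0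
  exact h0.symm

theorem stmt_6_general (n : ℕ)
    (U : Set (Fin (n - 1) → ℝ)) (hUopen : IsOpen U) (hU0 : (0 : Fin (n - 1) → ℝ) ∈ U)
    (γ : (Fin (n - 1) → ℝ) → ℝ) (hγ : ContDiffOn ℝ 2 γ U)
    (hγ0 : γ 0 = 0) (hγ'0 : fderiv ℝ γ 0 = 0)
    (J : Set ℝ)
    (V : Set ((Fin (n - 1) → ℝ) × ℝ × ℝ)) (hVopen : IsOpen V)
    (u : ((Fin (n - 1) → ℝ) × ℝ × ℝ) → ℝ) (hu : ContDiffOn ℝ 2 u V)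
    (hgraph : ∀ x' ∈ U, ∀ y ∈ J, ((x', γ x', y) : (Fin (n - 1) → ℝ) × ℝ × ℝ) ∈ V)
    (hNeu : ∀ x' ∈ U, ∀ y ∈ J,
      (∑ i : Fin (n - 1),
          fderiv ℝ u (x', γ x', y) (Pi.single i 1, 0, 0) * fderiv ℝ γ x' (Pi.single i 1))
        - fderiv ℝ u (x', γ x', y) (0, 1, 0) = 0) :
    ∀ y ∈ J, ∀ j : Fin (n - 1),
      fderiv ℝ (fun p => fderiv ℝ u p (0, 1, 0)) (0, 0, y) (Pi.single j 1, 0, 0)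
        = ∑ i : Fin (n - 1),
            fderiv ℝ u (0, 0, y) (Pi.single i 1, 0, 0)
              * fderiv ℝ (fun z => fderiv ℝ γ z (Pi.single j 1)) 0 (Pi.single i 1) := by
  intro y hy j
  have hγC : ContDiffAt ℝ 2 γ 0 := hγ.contDiffAt (hUopen.mem_nhds hU0)
  have huC : ContDiffAt ℝ 2 u (0, γ 0, y) := hu.contDiffAt (hVopen.mem_nhds (hgraph 0 hU0 y hy))
  have hγ₀ : HasFDerivAt γ (0 : (Fin (n - 1) → ℝ) →L[ℝ] ℝ) 0 :=
    hγ'0 ▸ (hγC.differentiableAt two_ne_zero).hasFDerivAt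
  have key := fderiv_fderiv_normal_of_neumann (fun i => Pi.single i 1) hγ₀
    hγC.differentiableAt_fderiv huC.differentiableAt_fderiv
    (eventually_of_mem (hUopen.mem_nhds hU0) fun x hx => hNeu x hx y hy) (Pi.single j 1)
  rw [hγ0] at key huC
  rw [fderiv_fderiv_apply huC.differentiableAt_fderiv, key]
  refine Finset.sum_congr rfl fun i _ => ?_
  rw [fderiv_fderiv_apply hγC.differentiableAt_fderiv, hγC.isSymmSndFDerivAt (by simp)]

/-- Identity (Ki78) in the proof of Lemma 2.1 (abbiamo). A point of `ℝⁿ × ℝ` is written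
`(x', xₙ, y)` with `x' ∈ ℝ^{n-1}`. Near the origin the domain is the epigraph of a `C²`
function `γ` with `γ(0) = 0`, `∇γ(0) = 0`, and `u` is `C²` near the lateral boundary and
satisfies the Neumann condition written in these coordinates. Then
`∂_{x_j}∂_{x_n} u(0,y) = Σ_i ∂_{x_i} u(0,y) ∂_{x_i}∂_{x_j} γ(0)` for all `y ∈ J`. -/
theorem stmt_6 (n : ℕ) (hn : 2 ≤ n)
    (U : Set (Fin (n - 1) → ℝ)) (hUopen : IsOpen U) (hU0 : (0 : Fin (n - 1) → ℝ) ∈ U)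
    (γ : (Fin (n - 1) → ℝ) → ℝ) (hγ : ContDiffOn ℝ 2 γ U)
    (hγ0 : γ 0 = 0) (hγ'0 : fderiv ℝ γ 0 = 0)
    (J : Set ℝ) (hJopen : IsOpen J) (hJpos : J ⊆ Set.Ioi (0 : ℝ))
    (V : Set ((Fin (n - 1) → ℝ) × ℝ × ℝ)) (hVopen : IsOpen V)
    (u : ((Fin (n - 1) → ℝ) × ℝ × ℝ) → ℝ) (hu : ContDiffOn ℝ 2 u V)
    (hgraph : ∀ x' ∈ U, ∀ y ∈ J, ((x', γ x', y) : (Fin (n - 1) → ℝ) × ℝ × ℝ) ∈ V)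
    (hNeu : ∀ x' ∈ U, ∀ y ∈ J,
      (∑ i : Fin (n - 1),
          fderiv ℝ u (x', γ x', y) (Pi.single i 1, 0, 0) * fderiv ℝ γ x' (Pi.single i 1))
        - fderiv ℝ u (x', γ x', y) (0, 1, 0) = 0) :
    ∀ y ∈ J, ∀ j : Fin (n - 1),
      fderiv ℝ (fun p => fderiv ℝ u p (0, 1, 0)) (0, 0, y) (Pi.single j 1, 0, 0)
        = ∑ i : Fin (n - 1),
            fderiv ℝ u (0, 0, y) (Pi.single i 1, 0, 0)
              * fderiv ℝ (fun z => fderiv ℝ γ z (Pi.single j 1)) 0 (Pi.single i 1) :=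
  stmt_6_general n U hUopen hU0 γ hγ hγ0 hγ'0 J V hVopen u hu hgraph hNeu
end

section
/- Let n ≥ 2. Let U ⊆ ℝ^{n-1} be an open neighborhood of the origin and γ : U → ℝ a C² function with γ(0) = 0 and ∇γ(0) = 0. Let J ⊆ (0,∞) be open, and let u be a C² real-valued function on an open subset of ℝⁿ × ℝ containing the set {(x', γ(x'), y) : x' ∈ U, y ∈ J}, where points are written (x₁,…,x_{n-1}, x_n, y). Assume the Neumann boundary condition written in these coordinates: for every x' ∈ U and every y ∈ J, Σ_{i=1}^{n-1} ∂_{x_i}u(x', γ(x'), y) · ∂_{x_i}γ(x') − ∂_{x_n}u(x', γ(x'), y) = 0. Write X = (X₁,…,X_{n+1}) := (x₁,…,x_n,y). Then for every y ∈ J: (i) ∂_y u(0,y) · ∂_{x_n}∂_y u(0,y) = 0, and (ii) Σ_{k=1}^{n+1} ∂_{X_k}u(0,y) · ∂_{x_n}∂_{X_k}u(0,y) = Σ_{i,j=1}^{n-1} ∂_{x_i}∂_{x_j}γ(0) · ∂_{x_i}u(0,y) · ∂_{x_j}u(0,y). Equivalently, since the exterior normal at the origin is ν = −e_n, one has ∇u(0,y)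 · ∂_ν(∇u)(0,y) = ∇_x u(0,y) · ∂_ν(∇_x u)(0,y) = − Σ_{i,j=1}^{n-1} ∂_{x_i}∂_{x_j}γ(0) ∂_{x_i}u(0,y) ∂_{x_j}u(0,y). -/
/-!
Differentiate the Neumann identity along the boundary at the origin. Since `∇γ(0) = 0`, every
term carrying a first derivative of `γ` drops out: the `y`-derivative gives `∂_y ∂_{x_n} u = 0`,
the `x_j`-derivative gives `∂_j ∂_{x_n} u = Σ_i ∂_i ∂_j γ(0) ∂_i u`, and the identity itself gives
`∂_{x_n} u = 0`. The symmetry of the Hessian of `u` turns these into (i) and (ii).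
-/

open Topology

section SecondDerivative

variable {𝕜 E F : Type*} [NontriviallyNormedField 𝕜] [NormedAddCommGroup E] [NormedSpace 𝕜 E]
  [NormedAddCommGroup F] [NormedSpace 𝕜 F] {f : E → F} {x : E}

theorem hasFDerivAt_fderiv_apply (hf : DifferentiableAt 𝕜 (fderiv 𝕜 f) x) (v : E) :
    HasFDerivAt (fun p => fderiv 𝕜 f p v) ((fderiv 𝕜 (fderiv 𝕜 f) x).flip v) x :=
  (ContinuousLinearMap.apply 𝕜 F v).hasFDerivAt.comp x hf.hasFDerivAt

theorem fderiv_fderiv_apply_s7 (hf : DifferentiableAt 𝕜 (fderiv 𝕜 f) x) (v w : E) :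
    fderiv 𝕜 (fun p => fderiv 𝕜 f p v) x w = fderiv 𝕜 (fderiv 𝕜 f) x w v := by
  rw [(hasFDerivAt_fderiv_apply hf v).fderiv]
  rfl

end SecondDerivative

theorem HasFDerivAt.graph {E G : Type*} [NormedAddCommGroup E] [NormedSpace ℝ E]
    [NormedAddCommGroup G] [NormedSpace ℝ G] {γ : E → ℝ} {γ' : E →L[ℝ] ℝ} {x : E}
    (hγ : HasFDerivAt γ γ' x) (y : G) :
    HasFDerivAt (fun z : E × G => (z.1, γ z.1, z.2))
      ((ContinuousLinearMap.fst ℝ E G).prod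
        ((γ'.comp (ContinuousLinearMap.fst ℝ E G)).prod (ContinuousLinearMap.snd ℝ E G))) (x, y) :=
  hasFDerivAt_fst.prodMk ((hγ.comp (x, y) hasFDerivAt_fst).prodMk hasFDerivAt_snd)

theorem fderiv_fderiv_vertical_eq_of_neumann {G : Type*} [NormedAddCommGroup G] [NormedSpace ℝ G]
    {m : ℕ} {γ : (Fin m → ℝ) → ℝ} {u : (Fin m → ℝ) × ℝ × G → ℝ} {x₀ : Fin m → ℝ} {y₀ : G}
    (hγ : ContDiffAt ℝ 2 γ x₀) (hγ' : fderiv ℝ γ x₀ = 0) (hu : ContDiffAt ℝ 2 u (x₀, γ x₀, y₀))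
    (hNeu : ∀ᶠ z in 𝓝 (x₀, y₀),
      (∑ i : Fin m,
          fderiv ℝ u (z.1, γ z.1, z.2) (Pi.single i 1, 0, 0) * fderiv ℝ γ z.1 (Pi.single i 1))
        - fderiv ℝ u (z.1, γ z.1, z.2) (0, 1, 0) = 0)
    (w : Fin m → ℝ) (t : G) :
    fderiv ℝ (fderiv ℝ u) (x₀, γ x₀, y₀) (w, 0, t) (0, 1, 0)
      = ∑ i : Fin m,
          fderiv ℝ u (x₀, γ x₀, y₀) (Pi.single i 1, 0, 0)
            * fderiv ℝ (fderiv ℝ γ) x₀ w (Pi.single i 1) := by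
  have hγ1 : HasFDerivAt γ 0 x₀ := hγ' ▸ (hγ.differentiableAt two_ne_zero).hasFDerivAt
  have hΦ := hγ1.graph y₀
  have hDu := hasFDerivAt_fderiv_apply (𝕜 := ℝ) (f := u)
    ((hu.fderiv_right (m := 1) le_rfl).differentiableAt one_ne_zero)
  have hDγ := hasFDerivAt_fderiv_apply (𝕜 := ℝ) (f := γ)
    ((hγ.fderiv_right (m := 1) le_rfl).differentiableAt one_ne_zero)
  have hF := (HasFDerivAt.sum (u := Finset.univ) fun i _ =>
      ((hDu (Pi.single i 1, 0, 0)).comp (x₀, y₀) hΦ).mul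
        ((hDγ (Pi.single i 1)).comp (x₀, y₀) (hasFDerivAt_fst (p := (x₀, y₀))))).sub
    ((hDu (0, 1, 0)).comp (x₀, y₀) hΦ)
  have hF0 := hF.unique ((hasFDerivAt_const 0 _).congr_of_eventuallyEq
    (hNeu.mono fun z hz => by simpa [Finset.sum_apply] using hz))
  have := congrArg (fun L => L (w, t)) hF0
  simp only [hγ', Function.comp_apply, zero_apply,
    ContinuousLinearMap.zero_comp, zero_smul, add_zero, sub_apply,
    sum_apply, smul_apply, ContinuousLinearMap.comp_apply,
    ContinuousLinearMap.coe_fst', ContinuousLinearMap.flip_apply, smul_eq_mul,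
    ContinuousLinearMap.prod_apply, ContinuousLinearMap.coe_snd'] at this
  linarith

theorem stmt_7_general (n : ℕ)
    (U : Set (Fin (n - 1) → ℝ)) (hUopen : IsOpen U) (hU0 : (0 : Fin (n - 1) → ℝ) ∈ U)
    (γ : (Fin (n - 1) → ℝ) → ℝ) (hγ : ContDiffOn ℝ 2 γ U)
    (hγ0 : γ 0 = 0) (hγ'0 : fderiv ℝ γ 0 = 0)
    (J : Set ℝ) (hJopen : IsOpen J)
    (V : Set ((Fin (n - 1) → ℝ) × ℝ × ℝ)) (hVopen : IsOpen V)
    (u : ((Fin (n - 1) → ℝ) × ℝ × ℝ) → ℝ) (hu : ContDiffOn ℝ 2 u V)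
    (hgraph : ∀ x' ∈ U, ∀ y ∈ J, ((x', γ x', y) : (Fin (n - 1) → ℝ) × ℝ × ℝ) ∈ V)
    (hNeu : ∀ x' ∈ U, ∀ y ∈ J,
      (∑ i : Fin (n - 1),
          fderiv ℝ u (x', γ x', y) (Pi.single i 1, 0, 0) * fderiv ℝ γ x' (Pi.single i 1))
        - fderiv ℝ u (x', γ x', y) (0, 1, 0) = 0) :
    ∀ y ∈ J,
      (fderiv ℝ u (0, 0, y) (0, 0, 1)
          * fderiv ℝ (fun p => fderiv ℝ u p (0, 0, 1)) (0, 0, y) (0, 1, 0) = 0)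
      ∧
      ((∑ i : Fin (n - 1),
          fderiv ℝ u (0, 0, y) (Pi.single i 1, 0, 0)
            * fderiv ℝ (fun p => fderiv ℝ u p (Pi.single i 1, 0, 0)) (0, 0, y) (0, 1, 0))
        + fderiv ℝ u (0, 0, y) (0, 1, 0)
            * fderiv ℝ (fun p => fderiv ℝ u p (0, 1, 0)) (0, 0, y) (0, 1, 0)
        + fderiv ℝ u (0, 0, y) (0, 0, 1)
            * fderiv ℝ (fun p => fderiv ℝ u p (0, 0, 1)) (0, 0, y) (0, 1, 0)
        = ∑ i : Fin (n - 1), ∑ j : Fin (n - 1),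
            fderiv ℝ (fun z => fderiv ℝ γ z (Pi.single j 1)) 0 (Pi.single i 1)
              * fderiv ℝ u (0, 0, y) (Pi.single i 1, 0, 0)
              * fderiv ℝ u (0, 0, y) (Pi.single j 1, 0, 0)) := by
  intro y hy
  have hγ2 : ContDiffAt ℝ 2 γ 0 := hγ.contDiffAt (hUopen.mem_nhds hU0)
  have hu2 : ContDiffAt ℝ 2 u (0, γ 0, y) := hu.contDiffAt (hVopen.mem_nhds (hgraph 0 hU0 y hy))
  have hvert := fderiv_fderiv_vertical_eq_of_neumann hγ2 hγ'0 hu2 <| by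
    filter_upwards [(hUopen.prod hJopen).mem_nhds ⟨hU0, hy⟩] with z hz
    exact hNeu z.1 hz.1 z.2 hz.2
  rw [hγ0] at hu2 hvert
  have hsymm := hu2.isSymmSndFDerivAt (by simp)
  have hnormal : fderiv ℝ u (0, 0, y) (0, 1, 0) = 0 := by
    simpa [hγ0, hγ'0] using hNeu 0 hU0 y hy
  have hvert_y : fderiv ℝ (fderiv ℝ u) (0, 0, y) (0, 0, 1) (0, 1, 0) = 0 := by
    simpa using hvert 0 1
  simp only [fderiv_fderiv_apply_s7 ((hu2.fderiv_right le_rfl).differentiableAt one_ne_zero),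
    fderiv_fderiv_apply_s7 ((hγ2.fderiv_right le_rfl).differentiableAt one_ne_zero)]
  refine ⟨by rw [hsymm, hvert_y, mul_zero], ?_⟩
  rw [hnormal, zero_mul, add_zero, hsymm (0, 1, 0) (0, 0, 1), hvert_y, mul_zero, add_zero]
  simp only [hsymm (0, 1, 0), hvert, Finset.mul_sum]
  exact Finset.sum_congr rfl fun i _ => Finset.sum_congr rfl fun j _ => by ring

/-- Identity (key-eq-EUCLIDEAN) of Lemma 2.1 (abbiamo). A point of `ℝⁿ × ℝ` is written
`(x', xₙ, y)`. With `γ`, `u` as in the normal-coordinates setting and the Neumann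
condition, for every `y ∈ J`:
(i) `∂_y u(0,y) · ∂_{x_n}∂_y u(0,y) = 0`, and
(ii) `Σ_{k=1}^{n+1} ∂_{X_k} u(0,y) · ∂_{x_n}∂_{X_k} u(0,y)
      = Σ_{i,j} ∂_{x_i}∂_{x_j}γ(0) ∂_{x_i}u(0,y) ∂_{x_j}u(0,y)`,
where the `X_k` run over the coordinates `x₁,…,x_{n-1}, x_n, y` (equivalently, since the
outer normal at the origin is `−eₙ`, `∇u · ∂_ν(∇u) = ∇ₓu · ∂_ν(∇ₓu) = −Σ_{i,j} …`). -/
theorem stmt_7 (n : ℕ) (hn : 2 ≤ n)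
    (U : Set (Fin (n - 1) → ℝ)) (hUopen : IsOpen U) (hU0 : (0 : Fin (n - 1) → ℝ) ∈ U)
    (γ : (Fin (n - 1) → ℝ) → ℝ) (hγ : ContDiffOn ℝ 2 γ U)
    (hγ0 : γ 0 = 0) (hγ'0 : fderiv ℝ γ 0 = 0)
    (J : Set ℝ) (hJopen : IsOpen J) (hJpos : J ⊆ Set.Ioi (0 : ℝ))
    (V : Set ((Fin (n - 1) → ℝ) × ℝ × ℝ)) (hVopen : IsOpen V)
    (u : ((Fin (n - 1) → ℝ) × ℝ × ℝ) → ℝ) (hu : ContDiffOn ℝ 2 u V)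
    (hgraph : ∀ x' ∈ U, ∀ y ∈ J, ((x', γ x', y) : (Fin (n - 1) → ℝ) × ℝ × ℝ) ∈ V)
    (hNeu : ∀ x' ∈ U, ∀ y ∈ J,
      (∑ i : Fin (n - 1),
          fderiv ℝ u (x', γ x', y) (Pi.single i 1, 0, 0) * fderiv ℝ γ x' (Pi.single i 1))
        - fderiv ℝ u (x', γ x', y) (0, 1, 0) = 0) :
    ∀ y ∈ J,
      (fderiv ℝ u (0, 0, y) (0, 0, 1)
          * fderiv ℝ (fun p => fderiv ℝ u p (0, 0, 1)) (0, 0, y) (0, 1, 0) = 0)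
      ∧
      ((∑ i : Fin (n - 1),
          fderiv ℝ u (0, 0, y) (Pi.single i 1, 0, 0)
            * fderiv ℝ (fun p => fderiv ℝ u p (Pi.single i 1, 0, 0)) (0, 0, y) (0, 1, 0))
        + fderiv ℝ u (0, 0, y) (0, 1, 0)
            * fderiv ℝ (fun p => fderiv ℝ u p (0, 1, 0)) (0, 0, y) (0, 1, 0)
        + fderiv ℝ u (0, 0, y) (0, 0, 1)
            * fderiv ℝ (fun p => fderiv ℝ u p (0, 0, 1)) (0, 0, y) (0, 1, 0)
        = ∑ i : Fin (n - 1), ∑ j : Fin (n - 1),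
            fderiv ℝ (fun z => fderiv ℝ γ z (Pi.single j 1)) 0 (Pi.single i 1)
              * fderiv ℝ u (0, 0, y) (Pi.single i 1, 0, 0)
              * fderiv ℝ u (0, 0, y) (Pi.single j 1, 0, 0)) :=
  stmt_7_general n U hUopen hU0 γ hγ hγ0 hγ'0 J hJopen V hVopen u hu hgraph hNeu
end

section
/- Let n ≥ 2. Let U ⊆ ℝ^{n-1} be an open neighborhood of the origin and γ : U → ℝ a C² function with γ(0) = 0 and ∇γ(0) = 0, and assume in addition that γ is convex on U. Let J ⊆ (0,∞) be open, and let u be a C² real-valued function on an open subset of ℝⁿ × ℝ containing the set {(x', γ(x'), y) : x' ∈ U, y ∈ J}, where points are written (x₁,…,x_{n-1}, x_n, y). Assume the Neumann boundary condition written in these coordinates: for every x' ∈ U and every y ∈ J, Σ_{i=1}^{n-1} ∂_{x_i}u(x', γ(x'), y) · ∂_{x_i}γ(x') − ∂_{x_n}u(x', γ(x'), y) = 0. Write X = (X₁,…,X_{n+1}) := (x₁,…,x_n,y). Then for every y ∈ J, Σ_{k=1}^{n+1} ∂_{X_k}u(0,y) · ∂_{x_n}∂_{X_k}u(0,y) ≥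 0; equivalently, since the exterior normal at the origin is ν = −e_n, one has ∇u(0,y) · ∂_ν(∇u)(0,y) ≤ 0. -/
/-!
At `x' = 0`, where `∇γ = 0`, the Neumann condition says that `∂ₙu` vanishes along the whole axis
`{(0, 0, y) : y ∈ J}`; hence the term `∂ₙu · ∂ₙ∂ₙu` vanishes, and so does `∂_y∂ₙu`. Differentiating
the Neumann condition at `0` in the direction of the tangential gradient `g = ∇_{x'}u(0, 0, y)`
gives `∂_g∂ₙu = D²γ(0)(g, g)`, and `∂_g∂ₙu` is exactly the remaining sum `∑ᵢ ∂ᵢu · ∂ₙ∂ᵢu`.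
Convexity of `γ` makes `D²γ(0)(g, g)` nonnegative.
-/

open Filter Set Topology

theorem ContinuousLinearMap.sum_mul_apply_single {ι R : Type*} [Fintype ι] [DecidableEq ι]
    [CommSemiring R] [TopologicalSpace R] (φ : (ι → R) →L[R] R) (v : ι → R) :
    ∑ i, v i * φ (Pi.single i 1) = φ v := by
  conv_rhs => rw [← Finset.univ_sum_single v, map_sum]
  refine Finset.sum_congr rfl fun i _ ↦ ?_
  rw [← smul_eq_mul, ← map_smul, ← Pi.single_smul', smul_eq_mul, mul_one]

theorem ContinuousLinearMap.sum_mul_apply_single_fst {ι R F : Type*} [Fintype ι] [DecidableEq ι]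
    [CommSemiring R] [TopologicalSpace R] [AddCommMonoid F] [Module R F] [TopologicalSpace F]
    (φ : (ι → R) × F →L[R] R) (v : ι → R) :
    ∑ i, v i * φ (Pi.single i 1, 0) = φ (v, 0) :=
  (φ.comp (ContinuousLinearMap.inl R (ι → R) F)).sum_mul_apply_single v

theorem HasFDerivAt.clm_apply_const {𝕜 E F G : Type*} [NontriviallyNormedField 𝕜]
    [NormedAddCommGroup E] [NormedSpace 𝕜 E] [NormedAddCommGroup F] [NormedSpace 𝕜 F]
    [NormedAddCommGroup G] [NormedSpace 𝕜 G] {c : E → F →L[𝕜] G} {c' : E →L[𝕜] F →L[𝕜] G}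
    {x : E} (hc : HasFDerivAt c c' x) (w : F) :
    HasFDerivAt (fun y ↦ c y w) (c'.flip w) x := by
  simpa using hc.clm_apply (hasFDerivAt_const w x)

theorem HasFDerivAt.apply_eq_zero_of_eventually_eq_zero_along {𝕜 E F : Type*}
    [NontriviallyNormedField 𝕜] [NormedAddCommGroup E] [NormedSpace 𝕜 E]
    [NormedAddCommGroup F] [NormedSpace 𝕜 F] {f : E → F} {f' : E →L[𝕜] F} {x v : E}
    (hf : HasFDerivAt f f' x) (h : ∀ᶠ t in 𝓝 (0 : 𝕜), f (x + t • v) = 0) : f' v = 0 :=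
  (hf.hasLineDerivAt v).unique ((hasDerivAt_const 0 0).congr_of_eventuallyEq h)

theorem HasDerivAt.nonneg_of_monotoneOn_of_mem_nhds {g : ℝ → ℝ} {g' x : ℝ} {s : Set ℝ}
    (hd : HasDerivAt g g' x) (hs : s ∈ 𝓝 x) (hg : MonotoneOn g s) : 0 ≤ g' := by
  have hacc : AccPt x (𝓟 (s ∩ univ)) :=
    (PerfectSpace.univ_preperfect x (mem_univ x)).nhds_inter hs
  exact hd.hasDerivWithinAt.nonneg_of_monotoneOn (by simpa using hacc) hg

theorem ConvexOn.apply_self_nonneg_of_hasFDerivAt_fderiv {E : Type*} [NormedAddCommGroup E]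
    [NormedSpace ℝ E] {s : Set E} {f : E → ℝ} {D : E →L[ℝ] E →L[ℝ] ℝ} {x : E}
    (hf : ConvexOn ℝ s f) (hs : IsOpen s) (hx : x ∈ s) (hdiff : DifferentiableOn ℝ f s)
    (hD : HasFDerivAt (fderiv ℝ f) D x) (v : E) : 0 ≤ D v v := by
  -- `D v v` is the second derivative at `0` of the restriction of `f` to a line, a convex
  -- function of one variable, whose derivative is therefore monotone.
  set L : ℝ →ᵃ[ℝ] E := AffineMap.lineMap x (x + v)
  have hL : ∀ t, HasDerivAt L v t := fun t ↦ by
    simpa using AffineMap.hasDerivAt_lineMap (a := x) (b := x + v) (x := t)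
  have hL0 : L 0 = x := AffineMap.lineMap_apply_zero x (x + v)
  have hS : L ⁻¹' s ∈ 𝓝 0 := (hL 0).continuousAt.preimage_mem_nhds (hL0 ▸ hs.mem_nhds hx)
  have hg : ∀ t ∈ L ⁻¹' s, HasDerivAt (f ∘ L) (fderiv ℝ f (L t) v) t := fun t ht ↦
    ((hdiff _ ht).differentiableAt (hs.mem_nhds ht)).hasFDerivAt.comp_hasDerivAt t (hL t)
  have hmono : MonotoneOn (deriv (f ∘ L)) (L ⁻¹' s) :=
    (hf.comp_affineMap L).monotoneOn_deriv fun t ht ↦ (hg t ht).differentiableAt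
  have hderiv2 : HasDerivAt (deriv (f ∘ L)) (D v v) 0 := by
    refine ((hD.clm_apply_const v).comp_hasDerivAt_of_eq 0 (hL 0) hL0.symm)
      |>.congr_of_eventuallyEq ?_
    filter_upwards [hS] with t ht using (hg t ht).deriv
  exact hderiv2.nonneg_of_monotoneOn_of_mem_nhds hS hmono

theorem fderiv_fderiv_tangent_normal_eq_of_neumann {m : ℕ} {U : Set (Fin m → ℝ)} (hU : U ∈ 𝓝 0)
    {γ : (Fin m → ℝ) → ℝ} {Dγ : (Fin m → ℝ) →L[ℝ] (Fin m → ℝ) →L[ℝ] ℝ}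
    (hγ0 : γ 0 = 0) (hγ'0 : HasFDerivAt γ (0 : (Fin m → ℝ) →L[ℝ] ℝ) 0)
    (hDγ : HasFDerivAt (fderiv ℝ γ) Dγ 0) {u : (Fin m → ℝ) × ℝ × ℝ → ℝ}
    {D : (Fin m → ℝ) × ℝ × ℝ →L[ℝ] (Fin m → ℝ) × ℝ × ℝ →L[ℝ] ℝ} {y : ℝ}
    (hD : HasFDerivAt (fderiv ℝ u) D (0, 0, y))
    (hNeu : ∀ x' ∈ U,
      (∑ i, fderiv ℝ u (x', γ x', y) (Pi.single i 1, 0, 0) * fderiv ℝ γ x' (Pi.single i 1))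
        - fderiv ℝ u (x', γ x', y) (0, 1, 0) = 0)
    (w : Fin m → ℝ) :
    D (w, 0, 0) (0, 1, 0) = Dγ w (fun i ↦ fderiv ℝ u (0, 0, y) (Pi.single i 1, 0, 0)) := by
  have hline : HasDerivAt (fun t : ℝ ↦ t • w) w 0 := by
    simpa using (hasDerivAt_id (0 : ℝ)).smul_const w
  have hline0 : (0 : Fin m → ℝ) = (0 : ℝ) • w := (zero_smul ℝ w).symm
  have hcurve : HasDerivAt (fun t : ℝ ↦ (t • w, γ (t • w), y)) (w, 0, 0) 0 := by
    refine hline.prodMk (HasDerivAt.prodMk ?_ (hasDerivAt_const 0 y))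
    simpa [Function.comp_def] using hγ'0.comp_hasDerivAt_of_eq 0 hline hline0
  have hdu : ∀ e, HasDerivAt (fun t : ℝ ↦ fderiv ℝ u (t • w, γ (t • w), y) e) (D (w, 0, 0) e) 0 :=
    fun e ↦ (hD.clm_apply_const e).comp_hasDerivAt_of_eq 0 hcurve (by simp [hγ0])
  have hdγ : ∀ e, HasDerivAt (fun t : ℝ ↦ fderiv ℝ γ (t • w) e) (Dγ w e) 0 :=
    fun e ↦ (hDγ.clm_apply_const e).comp_hasDerivAt_of_eq 0 hline hline0
  -- The Neumann expression along `t ↦ t • w` vanishes identically near `0`, so its derivative does.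
  have hN := (HasDerivAt.fun_sum (u := Finset.univ) fun i _ ↦
    (hdu (Pi.single i 1, 0, 0)).fun_mul (hdγ (Pi.single i 1))).fun_sub (hdu (0, 1, 0))
  have hN0 := hN.unique <| (hasDerivAt_const (0 : ℝ) (0 : ℝ)).congr_of_eventuallyEq <| by
    filter_upwards [(continuous_id.smul continuous_const).tendsto' (0 : ℝ) 0 (zero_smul ℝ w) hU]
      with t ht using hNeu _ ht
  simp only [zero_smul, hγ0, hγ'0.fderiv, zero_apply, mul_zero, zero_add] at hN0
  rw [(Dγ w).sum_mul_apply_single] at hN0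
  linarith

theorem stmt_8_general (n : ℕ)
    (U : Set (Fin (n - 1) → ℝ)) (hUopen : IsOpen U) (hU0 : (0 : Fin (n - 1) → ℝ) ∈ U)
    (γ : (Fin (n - 1) → ℝ) → ℝ) (hγ : ContDiffOn ℝ 2 γ U)
    (hγ0 : γ 0 = 0) (hγ'0 : fderiv ℝ γ 0 = 0) (hγconv : ConvexOn ℝ U γ)
    (J : Set ℝ) (hJopen : IsOpen J)
    (V : Set ((Fin (n - 1) → ℝ) × ℝ × ℝ)) (hVopen : IsOpen V)
    (u : ((Fin (n - 1) → ℝ) × ℝ × ℝ) → ℝ) (hu : ContDiffOn ℝ 2 u V)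
    (hgraph : ∀ x' ∈ U, ∀ y ∈ J, ((x', γ x', y) : (Fin (n - 1) → ℝ) × ℝ × ℝ) ∈ V)
    (hNeu : ∀ x' ∈ U, ∀ y ∈ J,
      (∑ i : Fin (n - 1),
          fderiv ℝ u (x', γ x', y) (Pi.single i 1, 0, 0) * fderiv ℝ γ x' (Pi.single i 1))
        - fderiv ℝ u (x', γ x', y) (0, 1, 0) = 0) :
    ∀ y ∈ J,
      0 ≤ (∑ i : Fin (n - 1),
            fderiv ℝ u (0, 0, y) (Pi.single i 1, 0, 0)
              * fderiv ℝ (fun p => fderiv ℝ u p (Pi.single i 1, 0, 0)) (0, 0, y) (0, 1, 0))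
          + fderiv ℝ u (0, 0, y) (0, 1, 0)
              * fderiv ℝ (fun p => fderiv ℝ u p (0, 1, 0)) (0, 0, y) (0, 1, 0)
          + fderiv ℝ u (0, 0, y) (0, 0, 1)
              * fderiv ℝ (fun p => fderiv ℝ u p (0, 0, 1)) (0, 0, y) (0, 1, 0) := by
  intro y hy
  have hγ₀ : ContDiffAt ℝ 2 γ 0 := hγ.contDiffAt (hUopen.mem_nhds hU0)
  have hu₀ : ContDiffAt ℝ 2 u (0, 0, y) :=
    hu.contDiffAt (hVopen.mem_nhds (by simpa [hγ0] using hgraph 0 hU0 y hy))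
  set D := fderiv ℝ (fderiv ℝ u) (0, 0, y)
  have hD : HasFDerivAt (fderiv ℝ u) D (0, 0, y) :=
    ((hu₀.fderiv_right one_add_one_eq_two.le).differentiableAt one_ne_zero).hasFDerivAt
  have hDγ := ((hγ₀.fderiv_right one_add_one_eq_two.le).differentiableAt one_ne_zero).hasFDerivAt
  have hD2 : ∀ v w, fderiv ℝ (fun p ↦ fderiv ℝ u p w) (0, 0, y) v = D w v := fun v w ↦ by
    rw [(hD.clm_apply_const w).fderiv, ContinuousLinearMap.flip_apply,
      hu₀.isSymmSndFDerivAt (by simp)]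
  have hnormal : ∀ y' ∈ J, fderiv ℝ u (0, 0, y') (0, 1, 0) = 0 := fun y' hy' ↦ by
    simpa [hγ0, hγ'0] using hNeu 0 hU0 y' hy'
  have hmixed : D (0, 0, 1) (0, 1, 0) = 0 :=
    (hD.clm_apply_const (0, 1, 0)).apply_eq_zero_of_eventually_eq_zero_along <| by
      filter_upwards [(continuous_const_add y).tendsto' 0 y (add_zero y) (hJopen.mem_nhds hy)]
        with t ht
      simpa using hnormal _ ht
  set g : Fin (n - 1) → ℝ := fun i ↦ fderiv ℝ u (0, 0, y) (Pi.single i 1, 0, 0)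
  have htangent : D (g, 0, 0) (0, 1, 0) = fderiv ℝ (fderiv ℝ γ) 0 g g :=
    fderiv_fderiv_tangent_normal_eq_of_neumann (hUopen.mem_nhds hU0) hγ0
      (hγ'0 ▸ (hγ₀.differentiableAt two_ne_zero).hasFDerivAt) hDγ hD
      (fun x' hx' ↦ hNeu x' hx' y hy) g
  have hconvex := hγconv.apply_self_nonneg_of_hasFDerivAt_fderiv hUopen hU0
    (hγ.differentiableOn two_ne_zero) hDγ g
  have htangential : ∑ i, fderiv ℝ u (0, 0, y) (Pi.single i 1, 0, 0)
      * D (Pi.single i 1, 0, 0) (0, 1, 0) = D (g, 0, 0) (0, 1, 0) :=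
    (D.flip (0, 1, 0)).sum_mul_apply_single_fst g
  simp only [hD2, hmixed, hnormal y hy, htangential, htangent]
  simpa using hconvex

/-- Formula (key-eq-EUCLIDEAN-2) of Lemma 2.1 (abbiamo): in the normal-coordinates
setting, if in addition `γ` is convex on `U` (convexity of the domain), then for every
`y ∈ J` one has `Σ_{k=1}^{n+1} ∂_{X_k} u(0,y) · ∂_{x_n}∂_{X_k} u(0,y) ≥ 0`; equivalently,
since the outer normal at the origin is `−eₙ`, `∇u(0,y) · ∂_ν(∇u)(0,y) ≤ 0`. -/
theorem stmt_8 (n : ℕ) (hn : 2 ≤ n)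
    (U : Set (Fin (n - 1) → ℝ)) (hUopen : IsOpen U) (hU0 : (0 : Fin (n - 1) → ℝ) ∈ U)
    (γ : (Fin (n - 1) → ℝ) → ℝ) (hγ : ContDiffOn ℝ 2 γ U)
    (hγ0 : γ 0 = 0) (hγ'0 : fderiv ℝ γ 0 = 0) (hγconv : ConvexOn ℝ U γ)
    (J : Set ℝ) (hJopen : IsOpen J) (hJpos : J ⊆ Set.Ioi (0 : ℝ))
    (V : Set ((Fin (n - 1) → ℝ) × ℝ × ℝ)) (hVopen : IsOpen V)
    (u : ((Fin (n - 1) → ℝ) × ℝ × ℝ) → ℝ) (hu : ContDiffOn ℝ 2 u V)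
    (hgraph : ∀ x' ∈ U, ∀ y ∈ J, ((x', γ x', y) : (Fin (n - 1) → ℝ) × ℝ × ℝ) ∈ V)
    (hNeu : ∀ x' ∈ U, ∀ y ∈ J,
      (∑ i : Fin (n - 1),
          fderiv ℝ u (x', γ x', y) (Pi.single i 1, 0, 0) * fderiv ℝ γ x' (Pi.single i 1))
        - fderiv ℝ u (x', γ x', y) (0, 1, 0) = 0) :
    ∀ y ∈ J,
      0 ≤ (∑ i : Fin (n - 1),
            fderiv ℝ u (0, 0, y) (Pi.single i 1, 0, 0)
              * fderiv ℝ (fun p => fderiv ℝ u p (Pi.single i 1, 0, 0)) (0, 0, y) (0, 1, 0))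
          + fderiv ℝ u (0, 0, y) (0, 1, 0)
              * fderiv ℝ (fun p => fderiv ℝ u p (0, 1, 0)) (0, 0, y) (0, 1, 0)
          + fderiv ℝ u (0, 0, y) (0, 0, 1)
              * fderiv ℝ (fun p => fderiv ℝ u p (0, 0, 1)) (0, 0, y) (0, 1, 0) :=
  stmt_8_general n U hUopen hU0 γ hγ hγ0 hγ'0 hγconv J hJopen V hVopen u hu hgraph hNeu
end
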